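/- Spurious-pole cancellation identity at five points: under five-point momentum conservation, for any α ∈ ℂ with ⟨14⟩ ≠ 0 and α⟨41⟩ − ⟨45⟩ ≠ 0, one has ([23]⟨34⟩/⟨14⟩) · (α⟨41⟩/(α⟨41⟩ − ⟨45⟩)) + ⟨45⟩·([12] + α[52])/(⟨45⟩ − α⟨41⟩) = [12]. (Here [12] + α[52] is the shifted bracket [1̂2] and ⟨45⟩ − α⟨41⟩ is the shifted bracket ⟨45̂⟩ produced by the BCFW shift λ̃̂₁ = λ̃₁ + αλ̃₅, λ̂₅ = λ₅ − αλ₁.) -/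

import Mathlib

/-!
Momentum conservation `∑ᵢ λᵢ λ̃ᵢ = 0`, contracted with `λ₄` on the left and `λ̃₂` on the right,
gives `⟨41⟩[12] + ⟨43⟩[32] + ⟨45⟩[52] = 0`. This expresses the numerator `[23]⟨34⟩` through
`⟨41⟩`, `⟨45⟩`, `[12]`, `[52]`, after which the two terms share the denominator `α⟨41⟩ − ⟨45⟩`
and their sum collapses to `[12]`.
-/

/-- The antisymmetric two-component spinor bracket `⟨u v⟩ = u₀v₁ − u₁v₀`. -/
def br2 (u v : Fin 2 → ℂ) : ℂ := u 0 * v 1 - u 1 * v 0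

open Finset

lemma br2_antisymm (u v : Fin 2 → ℂ) : br2 u v = -br2 v u := by
  unfold br2; ring

lemma br2_self (u : Fin 2 → ℂ) : br2 u u = 0 := by
  unfold br2; ring

lemma sum_br2_mul_br2_eq_zero {ι : Type*} (s : Finset ι) (l lt : ι → Fin 2 → ℂ)
    (hcons : ∀ a b : Fin 2, ∑ i ∈ s, l i a * lt i b = 0) (μ ν : Fin 2 → ℂ) :
    ∑ i ∈ s, br2 μ (l i) * br2 (lt i) ν = 0 := by
  have expand : ∀ i, br2 μ (l i) * br2 (lt i) ν =
      μ 0 * ν 1 * (l i 1 * lt i 0) - μ 0 * ν 0 * (l i 1 * lt i 1)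
        - μ 1 * ν 1 * (l i 0 * lt i 0) + μ 1 * ν 0 * (l i 0 * lt i 1) := by
    intro i; unfold br2; ring
  simp only [expand, sum_add_distrib, sum_sub_distrib, ← mul_sum, hcons]
  ring

lemma five_point_momentum_sandwich (l1 l2 l3 l4 l5 lt1 lt2 lt3 lt4 lt5 : Fin 2 → ℂ)
    (hcons : ∀ a b : Fin 2,
      l1 a * lt1 b + l2 a * lt2 b + l3 a * lt3 b + l4 a * lt4 b + l5 a * lt5 b = 0) :
    br2 lt2 lt3 * br2 l3 l4 = -(br2 l4 l1 * br2 lt1 lt2 + br2 l4 l5 * br2 lt5 lt2) := by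
  have h := sum_br2_mul_br2_eq_zero univ ![l1, l2, l3, l4, l5] ![lt1, lt2, lt3, lt4, lt5]
    (by simpa [Fin.sum_univ_five] using hcons) l4 lt2
  simp only [Fin.sum_univ_five, Matrix.cons_val, br2_self, mul_zero, zero_mul,
    add_zero] at h
  rw [br2_antisymm lt2, br2_antisymm l3]
  linear_combination h

lemma div_neg_mul_add_div_sub_eq {K : Type*} [Field K] {a b c x y α : K} (ha : a ≠ 0)
    (hd : α * a - b ≠ 0) (hc : c = -(a * x + b * y)) :
    c / -a * (α * a / (α * a - b)) + b * (x + α * y) / (b - α * a) = x := by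
  have ha' : -a ≠ 0 := neg_ne_zero.mpr ha
  have hd' : b - α * a ≠ 0 := by rwa [← neg_sub, neg_ne_zero]
  rw [div_mul_div_comm, div_add_div _ _ (mul_ne_zero ha' hd) hd',
    div_eq_iff (mul_ne_zero (mul_ne_zero ha' hd) hd'), hc]
  ring

/-- Spurious-pole cancellation identity at five points: under five-point momentum
conservation, `([23]⟨34⟩/⟨14⟩)·(α⟨41⟩/(α⟨41⟩−⟨45⟩)) + ⟨45⟩([12]+α[52])/(⟨45⟩−α⟨41⟩) = [12]`. -/
theorem five_point_spurious_pole_cancellation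
    (l1 l2 l3 l4 l5 lt1 lt2 lt3 lt4 lt5 : Fin 2 → ℂ)
    (hcons : ∀ a b : Fin 2,
      l1 a * lt1 b + l2 a * lt2 b + l3 a * lt3 b + l4 a * lt4 b + l5 a * lt5 b = 0)
    (α : ℂ) (h14 : br2 l1 l4 ≠ 0) (hden : α * br2 l4 l1 - br2 l4 l5 ≠ 0) :
    (br2 lt2 lt3 * br2 l3 l4 / br2 l1 l4) *
        (α * br2 l4 l1 / (α * br2 l4 l1 - br2 l4 l5))
      + br2 l4 l5 * (br2 lt1 lt2 + α * br2 lt5 lt2) / (br2 l4 l5 - α * br2 l4 l1)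
      = br2 lt1 lt2 := by
  rw [br2_antisymm l1] at h14 ⊢
  exact div_neg_mul_add_div_sub_eq (neg_ne_zero.mp h14) hden
    (five_point_momentum_sandwich l1 l2 l3 l4 l5 lt1 lt2 lt3 lt4 lt5 hcons)
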